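/- Let S be a set of index pairs containing all diagonal pairs (j,j), and suppose the graph on {1,...,d} with edges given by the off-diagonal pairs in S has connected components V_1,...,V_K. Let L(W) = Σ_{(j,k)∈S} λ_{jk}(W_{jk} - y_{jk})² with λ_{jk} > 0. If Σ* is the maximizer of log det(Σ) over the minimizers of L on the PSD cone (and a positive definite minimizer exists), then Σ* is block diagonal with respect to the partition V_1,...,V_K. -/

import Mathlib

/-!
Σ is positive definite, since its determinant dominates that of a positive definite minimizer.
For `j`, `k` in different components, neither `(j, k)` nor `(k, j)` lies in `S`, so moving Σ along
`H = e_j e_kᵀ + e_k e_jᵀ` leaves `L` unchanged, and `Σ + t H` stays positive definite for small `t`.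
Hence `t ↦ det (Σ + t H)` has a local maximum at `0`, and by Jacobi's formula its derivative there,
`det Σ · tr (Σ⁻¹ H) = 2 det Σ · (Σ⁻¹)_{jk}`, vanishes. So Σ⁻¹ is block diagonal, i.e. it commutes
with the coordinate projection onto each block; then so does Σ.
-/

open Matrix Filter Topology

namespace Matrix

variable {n : Type*} [Fintype n]

theorem PosDef.exists_pos_mul_dotProduct_le [DecidableEq n] {A : Matrix n n ℝ} (hA : A.PosDef) :
    ∃ c > 0, ∀ x : n → ℝ, c * (x ⬝ᵥ x) ≤ x ⬝ᵥ A *ᵥ x := by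
  obtain ⟨c, hc, hcle⟩ : ∃ c > 0, ∀ i, c ≤ hA.1.eigenvalues i := by
    rcases isEmpty_or_nonempty n with hn | hn
    · exact ⟨1, one_pos, fun i => isEmptyElim i⟩
    · obtain ⟨i, hi⟩ := Finite.exists_min hA.1.eigenvalues
      exact ⟨_, hA.eigenvalues_pos i, hi⟩
  have hsub : (A - algebraMap ℝ _ c).PosSemidef := by
    refine posSemidef_iff_isHermitian_and_spectrum_nonneg.mpr
      ⟨by rw [Algebra.algebraMap_eq_smul_one]; exact hA.1.sub (isHermitian_one.smul (.all c)), ?_⟩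
    rw [← spectrum.sub_singleton_eq, hA.1.spectrum_real_eq_range_eigenvalues]
    rintro _ ⟨_, ⟨i, rfl⟩, _, rfl, rfl⟩
    exact sub_nonneg.mpr (hcle i)
  refine ⟨c, hc, fun x => ?_⟩
  have := hsub.dotProduct_mulVec_nonneg x
  simp only [star_trivial, Algebra.algebraMap_eq_smul_one, sub_mulVec, smul_mulVec, one_mulVec,
    dotProduct_sub, dotProduct_smul, smul_eq_mul] at this
  linarith

theorem abs_dotProduct_mulVec_le (H : Matrix n n ℝ) (x : n → ℝ) :
    |x ⬝ᵥ H *ᵥ x| ≤ (∑ a, ∑ b, |H a b|) * (x ⬝ᵥ x) := by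
  have hcoord : ∀ a b, |x a| * |x b| ≤ x ⬝ᵥ x := fun a b => by
    have hsq : ∀ c, x c ^ 2 ≤ x ⬝ᵥ x := fun c => by
      rw [sq]
      exact Finset.single_le_sum (f := fun c => x c * x c) (fun c _ => mul_self_nonneg _)
        (Finset.mem_univ c)
    nlinarith [hsq a, hsq b, sq_nonneg (|x a| - |x b|), sq_abs (x a), sq_abs (x b)]
  calc |x ⬝ᵥ H *ᵥ x| = |∑ a, ∑ b, x a * H a b * x b| := by
        simp only [dotProduct, mulVec, Finset.mul_sum, mul_comm, mul_left_comm]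
    _ ≤ ∑ a, ∑ b, |H a b| * (x ⬝ᵥ x) := by
        refine (Finset.abs_sum_le_sum_abs _ _).trans (Finset.sum_le_sum fun a _ => ?_)
        refine (Finset.abs_sum_le_sum_abs _ _).trans (Finset.sum_le_sum fun b _ => ?_)
        rw [abs_mul, abs_mul]
        linarith [mul_le_mul_of_nonneg_left (hcoord a b) (abs_nonneg (H a b))]
    _ = (∑ a, ∑ b, |H a b|) * (x ⬝ᵥ x) := by simp only [Finset.sum_mul]

theorem PosDef.eventually_posDef_add_smul [DecidableEq n] {A H : Matrix n n ℝ} (hA : A.PosDef)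
    (hH : H.IsHermitian) : ∀ᶠ t in 𝓝 (0 : ℝ), (A + t • H).PosDef := by
  obtain ⟨c, hc, hcA⟩ := hA.exists_pos_mul_dotProduct_le
  set C := ∑ a, ∑ b, |H a b|
  have hC : 0 ≤ C := by positivity
  filter_upwards [Metric.ball_mem_nhds (0 : ℝ) (div_pos hc (by linarith : 0 < C + 1))] with t ht
  rw [Metric.mem_ball, dist_zero_right, Real.norm_eq_abs, lt_div_iff₀ (by linarith)] at ht
  refine posDef_iff_dotProduct_mulVec.mpr ⟨hA.1.add (hH.smul (.all t)), fun x hx => ?_⟩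
  have hxx : 0 < x ⬝ᵥ x := by simpa using dotProduct_self_star_pos_iff.mpr hx
  have htH : |t * (x ⬝ᵥ H *ᵥ x)| ≤ |t| * (C * (x ⬝ᵥ x)) := by
    rw [abs_mul]
    exact mul_le_mul_of_nonneg_left (abs_dotProduct_mulVec_le H x) (abs_nonneg t)
  have hgap : 0 < (c - |t| * C) * (x ⬝ᵥ x) := mul_pos (by nlinarith [abs_nonneg t]) hxx
  simp only [star_trivial, add_mulVec, smul_mulVec, dotProduct_add, dotProduct_smul, smul_eq_mul]
  linarith [neg_abs_le (t * (x ⬝ᵥ H *ᵥ x)), hcA x]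

theorem eval_det_one_add_X_smul {R : Type*} [CommRing R] [DecidableEq n] (M : Matrix n n R)
    (r : R) : ((1 + (Polynomial.X : Polynomial R) • M.map Polynomial.C).det).eval r =
      (1 + r • M).det := by
  rw [← Polynomial.coe_evalRingHom, RingHom.map_det]
  congr 1
  ext a b
  by_cases h : a = b <;> simp [h] <;> ring

theorem trace_inv_mul_eq_zero_of_isLocalMax {A H : Matrix n n ℝ} [DecidableEq n]
    (hA : IsUnit A.det) (hmax : IsLocalMax (fun t : ℝ => (A + t • H).det) 0) :
    (A⁻¹ * H).trace = 0 := by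
  set p := (1 + (Polynomial.X : Polynomial ℝ) • (A⁻¹ * H).map Polynomial.C).det
  have hdet : ∀ t : ℝ, (A + t • H).det = A.det * p.eval t := fun t => by
    have : A + t • H = A * (1 + t • (A⁻¹ * H)) := by
      rw [mul_add, mul_one, Matrix.mul_smul, ← mul_assoc, mul_nonsing_inv A hA, one_mul]
    rw [this, det_mul, eval_det_one_add_X_smul]
  have hderiv := ((p.hasDerivAt 0).const_mul A.det).congr_of_eventuallyEq
    (Eventually.of_forall hdet)
  have := hmax.hasDerivAt_eq_zero hderiv
  rw [derivative_det_one_add_X_smul] at this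
  exact (mul_eq_zero.mp this).resolve_left hA.ne_zero

theorem PosDef.inv_apply_eq_zero_of_forall_det_le [DecidableEq n] {A : Matrix n n ℝ}
    (hA : A.PosDef) {j k : n}
    (hle : ∀ t : ℝ, (A + t • (single j k 1 + single k j 1)).PosSemidef →
      (A + t • (single j k 1 + single k j 1)).det ≤ A.det) :
    A⁻¹ j k = 0 := by
  have hH : (single j k 1 + single k j 1 : Matrix n n ℝ).IsHermitian := by
    simp [IsHermitian, add_comm]
  have hmax : IsLocalMax (fun t : ℝ => (A + t • (single j k 1 + single k j 1)).det) 0 := by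
    filter_upwards [hA.eventually_posDef_add_smul hH] with t ht
    simpa only [zero_smul, add_zero] using hle t ht.posSemidef
  have htrace := trace_inv_mul_eq_zero_of_isLocalMax (isUnit_iff_ne_zero.mpr hA.det_pos.ne') hmax
  have hsymm : A⁻¹ k j = A⁻¹ j k := by simpa using hA.inv.1.apply j k
  rw [mul_add, trace_add, trace_mul_single, trace_mul_single, hsymm] at htrace
  simp only [MulOpposite.op_one, one_smul] at htrace
  linarith

theorem single_add_single_apply_eq_zero {α : Type*} [AddZeroClass α] [One α] {m : Type*}
    [DecidableEq m] {j k : m} {p : m × m} (h₁ : p ≠ (j, k)) (h₂ : p ≠ (k, j)) :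
    (single j k 1 + single k j 1 : Matrix m m α) p.1 p.2 = 0 := by
  obtain ⟨a, b⟩ := p
  rw [Matrix.add_apply, single_apply, single_apply, if_neg (by rintro ⟨rfl, rfl⟩; exact h₁ rfl),
    if_neg (by rintro ⟨rfl, rfl⟩; exact h₂ rfl), add_zero]

theorem commute_diagonal_indicator_iff {α : Type*} [Semiring α] [DecidableEq n]
    (A : Matrix n n α) (s : Finset n) :
    Commute A (diagonal fun a => if a ∈ s then 1 else 0) ↔
      ∀ a b, ¬(a ∈ s ↔ b ∈ s) → A a b = 0 := by
  simp only [Commute, SemiconjBy, ← Matrix.ext_iff, mul_diagonal, diagonal_mul]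
  refine forall_congr' fun a => forall_congr' fun b => ?_
  by_cases ha : a ∈ s <;> by_cases hb : b ∈ s <;> simp [ha, hb, eq_comm]

theorem commute_of_commute_nonsing_inv [DecidableEq n] {α : Type*} [CommRing α]
    {A B : Matrix n n α} (hA : IsUnit A.det) (h : Commute A⁻¹ B) : Commute A B :=
  calc A * B = A * (B * A⁻¹) * A := by
        rw [mul_assoc, mul_assoc, nonsing_inv_mul A hA, mul_one]
    _ = A * (A⁻¹ * B) * A := by rw [h.eq]
    _ = B * A := by rw [← mul_assoc, mul_nonsing_inv A hA, one_mul]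

theorem apply_eq_zero_of_nonsing_inv_apply_eq_zero [DecidableEq n] {α : Type*} [CommRing α]
    {A : Matrix n n α} (hA : IsUnit A.det) (s : Finset n)
    (h : ∀ a b, ¬(a ∈ s ↔ b ∈ s) → A⁻¹ a b = 0) {a b : n} (hab : ¬(a ∈ s ↔ b ∈ s)) :
    A a b = 0 :=
  (commute_diagonal_indicator_iff A s).mp
    (commute_of_commute_nonsing_inv hA ((commute_diagonal_indicator_iff _ s).mpr h)) a b hab

end Matrix

theorem max_entropy_reconstruction_block_diagonal_general {d K : ℕ}
    (S : Finset (Fin d × Fin d))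
    (lam y : Fin d × Fin d → ℝ)
    (L : Matrix (Fin d) (Fin d) ℝ → ℝ)
    (hL : ∀ W, L W = ∑ p ∈ S, lam p * (W p.1 p.2 - y p) ^ 2)
    (G : SimpleGraph (Fin d))
    (hG : ∀ j k, G.Adj j k ↔ (j ≠ k ∧ ((j, k) ∈ S ∨ (k, j) ∈ S)))
    (V : Fin K → Finset (Fin d))
    (hdisj : ∀ i i', i ≠ i' → Disjoint (V i) (V i'))
    (hcover : ∀ j, ∃ i, j ∈ V i)
    (hcomp : ∀ j k, (∃ i, j ∈ V i ∧ k ∈ V i) ↔ G.Reachable j k)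
    (Sig : Matrix (Fin d) (Fin d) ℝ)
    (hpsd : Sig.PosSemidef)
    (hminSig : ∀ W : Matrix (Fin d) (Fin d) ℝ, W.PosSemidef → L Sig ≤ L W)
    (hPD : ∃ W : Matrix (Fin d) (Fin d) ℝ, W.PosDef ∧
      ∀ W' : Matrix (Fin d) (Fin d) ℝ, W'.PosSemidef → L W ≤ L W')
    (hmax : ∀ W : Matrix (Fin d) (Fin d) ℝ, W.PosSemidef →
      (∀ W' : Matrix (Fin d) (Fin d) ℝ, W'.PosSemidef → L W ≤ L W') →
      W.det ≤ Sig.det) :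
    ∀ j k, (∀ i, ¬(j ∈ V i ∧ k ∈ V i)) → Sig j k = 0 := by
  obtain ⟨W₀, hW₀, hW₀min⟩ := hPD
  have hSig : Sig.PosDef := hpsd.posDef_iff_det_ne_zero.mpr
    (hW₀.det_pos.trans_le (hmax W₀ hW₀.posSemidef hW₀min)).ne'
  have hnotS : ∀ j k, ¬G.Reachable j k → (j, k) ∉ S := fun j k hjk hjkS =>
    hjk ((hG j k).mpr ⟨fun h => hjk (h ▸ .rfl), .inl hjkS⟩).reachable
  have hinv : ∀ j k, ¬G.Reachable j k → Sig⁻¹ j k = 0 := by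
    intro j k hjk
    have hLt : ∀ t : ℝ, L (Sig + t • (single j k 1 + single k j 1)) = L Sig := fun t => by
      simp only [hL]
      refine Finset.sum_congr rfl fun p hp => ?_
      rw [Matrix.add_apply, Matrix.smul_apply, single_add_single_apply_eq_zero
        (fun h => hnotS j k hjk (h ▸ hp)) (fun h => hnotS k j (hjk ∘ .symm) (h ▸ hp)),
        smul_zero, add_zero]
    exact hSig.inv_apply_eq_zero_of_forall_det_le fun t ht =>
      hmax _ ht fun W hW => hLt t ▸ hminSig W hW
  intro j k hjk
  obtain ⟨i, hj⟩ := hcover j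
  refine apply_eq_zero_of_nonsing_inv_apply_eq_zero (isUnit_iff_ne_zero.mpr hSig.det_pos.ne') (V i)
    (fun a b hab => hinv a b fun hr => ?_) (by simpa [hj] using hjk i)
  obtain ⟨i', ha, hb⟩ := (hcomp a b).mpr hr
  obtain rfl | hne := eq_or_ne i' i
  · exact hab (iff_of_true ha hb)
  · have hout := Finset.disjoint_left.mp (hdisj i' i hne)
    exact hab (iff_of_false (hout ha) (hout hb))

/-- If the measurement set `S` (containing the diagonal) induces a graph whose connected
components are `V 1, …, V K`, then the maximum-entropy covariance reconstruction
(the determinant-maximal PSD minimizer of the reconstruction loss `L`, assuming a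
positive definite minimizer exists) is block diagonal with respect to the components. -/
theorem max_entropy_reconstruction_block_diagonal {d K : ℕ}
    (S : Finset (Fin d × Fin d)) (hdiag : ∀ j, (j, j) ∈ S)
    (lam y : Fin d × Fin d → ℝ) (hlam : ∀ p ∈ S, 0 < lam p)
    (L : Matrix (Fin d) (Fin d) ℝ → ℝ)
    (hL : ∀ W, L W = ∑ p ∈ S, lam p * (W p.1 p.2 - y p) ^ 2)
    (G : SimpleGraph (Fin d))
    (hG : ∀ j k, G.Adj j k ↔ (j ≠ k ∧ ((j, k) ∈ S ∨ (k, j) ∈ S)))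
    (V : Fin K → Finset (Fin d))
    (hdisj : ∀ i i', i ≠ i' → Disjoint (V i) (V i'))
    (hcover : ∀ j, ∃ i, j ∈ V i)
    (hcomp : ∀ j k, (∃ i, j ∈ V i ∧ k ∈ V i) ↔ G.Reachable j k)
    (Sig : Matrix (Fin d) (Fin d) ℝ)
    (hpsd : Sig.PosSemidef)
    (hminSig : ∀ W : Matrix (Fin d) (Fin d) ℝ, W.PosSemidef → L Sig ≤ L W)
    (hPD : ∃ W : Matrix (Fin d) (Fin d) ℝ, W.PosDef ∧
      ∀ W' : Matrix (Fin d) (Fin d) ℝ, W'.PosSemidef → L W ≤ L W')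
    (hmax : ∀ W : Matrix (Fin d) (Fin d) ℝ, W.PosSemidef →
      (∀ W' : Matrix (Fin d) (Fin d) ℝ, W'.PosSemidef → L W ≤ L W') →
      W.det ≤ Sig.det) :
    ∀ j k, (∀ i, ¬(j ∈ V i ∧ k ∈ V i)) → Sig j k = 0 :=
  max_entropy_reconstruction_block_diagonal_general S lam y L hL G hG V hdisj hcover hcomp Sig hpsd
    hminSig hPD hmax
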